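/- For every λ ≥ 0 and all x, y ∈ ℤ^d, the annealed two-point function is subadditive: b_λ(x + y) ≤ b_λ(x) + b_λ(y). -/

import Mathlib

open MeasureTheory ProbabilityTheory Filter Topology Set Pointwise

noncomputable section

namespace RWRP

/-- The `2d` unit steps in `ℤ^d`. -/
def unitSteps (d : ℕ) : Finset (Fin d → ℤ) :=
  (Finset.univ : Finset (Fin d × Bool)).image
    (fun p => fun j => if j = p.1 then (if p.2 then 1 else -1) else 0)

/-- The uniform distribution on the `2d` unit steps of `ℤ^d`. -/
def stepDist (d : ℕ) : Measure (Fin d → ℤ) :=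
  ((unitSteps d).card : ENNReal)⁻¹ • ∑ s ∈ unitSteps d, Measure.dirac s

/-- `S` is the symmetric nearest-neighbor random walk on `ℤ^d` under `P`, started at the
origin: `S 0 = 0` and the increments are i.i.d., uniformly distributed on the unit steps. -/
def IsSRW {d : ℕ} {Ω : Type*} [MeasurableSpace Ω] (P : Measure Ω)
    (S : ℕ → Ω → Fin d → ℤ) : Prop :=
  (∀ ω, S 0 ω = 0) ∧ (∀ n, Measurable (S n)) ∧
    (∀ n, Measure.map (fun ω => S (n + 1) ω - S n ω) P = stepDist d) ∧
    iIndepFun (fun n ω => S (n + 1) ω - S n ω) P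

/-- The `ℓ¹`-norm of a point of `ℤ^d`. -/
def norm1Z {d : ℕ} (x : Fin d → ℤ) : ℝ := ∑ i, |(x i : ℝ)|

/-- The `ℓ¹`-norm on `ℝ^d`. -/
def norm1R {d : ℕ} (x : Fin d → ℝ) : ℝ := ∑ i, |x i|

/-- The embedding `ℤ^d → ℝ^d`. -/
def zToR {d : ℕ} (x : Fin d → ℤ) : Fin d → ℝ := fun i => (x i : ℝ)

/-- Euclidean scalar product on `ℝ^d`. -/
def dotR {d : ℕ} (h x : Fin d → ℝ) : ℝ := ∑ i, h i * x i

/-- `f` is a norm on `ℝ^d`. -/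
def IsNorm {d : ℕ} (f : (Fin d → ℝ) → ℝ) : Prop :=
  (∀ x, 0 ≤ f x) ∧ (∀ x, f x = 0 ↔ x = 0) ∧
    (∀ (c : ℝ) (x), f (c • x) = |c| * f x) ∧ ∀ x y, f (x + y) ≤ f x + f y

/-- The dual norm `f*(ℓ) = sup_{x ≠ 0} (ℓ·x)/f(x)`. -/
def dualNorm {d : ℕ} (f : (Fin d → ℝ) → ℝ) (ℓ : Fin d → ℝ) : ℝ :=
  ⨆ x : {x : Fin d → ℝ // x ≠ 0}, dotR ℓ x.1 / f x.1

/-- Number of visits of the walk to `x` during `1 ≤ m ≤ n`. -/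
def localTime {d : ℕ} {Ω : Type*} (S : ℕ → Ω → Fin d → ℤ) (x : Fin d → ℤ) (n : ℕ)
    (ω : Ω) : ℕ :=
  ((Finset.Icc 1 n).filter (fun m => S m ω = x)).card

/-- Time of the first visit of the walk to the site `x`. -/
def hitTime {d : ℕ} {Ω : Type*} (S : ℕ → Ω → Fin d → ℤ) (x : Fin d → ℤ) (ω : Ω) : ℕ :=
  sInf {n : ℕ | S n ω = x}

/-- The event that the walk ever visits the site `x`, i.e. `H(x) < ∞`. -/
def hits {d : ℕ} {Ω : Type*} (S : ℕ → Ω → Fin d → ℤ) (x : Fin d → ℤ) : Set Ω :=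
  {ω | ∃ n, S n ω = x}

/-- Entrance time of the walk into the half-space `{x : ℓ·x ≥ u}`. -/
def hitHalf {d : ℕ} {Ω : Type*} (S : ℕ → Ω → Fin d → ℤ) (ℓ : Fin d → ℝ) (u : ℝ)
    (ω : Ω) : ℕ :=
  sInf {n : ℕ | u ≤ dotR ℓ (zToR (S n ω))}

/-- The annealed path potential `Φ(n) = Σ_{x ∈ ℤ^d} φ(l_x(n))`. -/
def annPotential {d : ℕ} {Ω : Type*} (φ : ℝ → ℝ) (S : ℕ → Ω → Fin d → ℤ) (n : ℕ)
    (ω : Ω) : ℝ :=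
  ∑' x : Fin d → ℤ, φ (localTime S x n ω)

/-- Assumptions (An) on the annealed potential shape function `φ`. -/
def IsGoodPhi (φ : ℝ → ℝ) : Prop :=
  φ 0 = 0 ∧ (∀ t, 0 ≤ t → 0 ≤ φ t) ∧ MonotoneOn φ (Ici 0) ∧ ConcaveOn ℝ (Ici 0) φ ∧
    (∃ t, 0 ≤ t ∧ φ t ≠ 0) ∧ Tendsto (fun t => φ t / t) atTop (𝓝 0)

/-- The annealed two-point function `b_λ(x)`. -/
def twoPointB {d : ℕ} {Ω : Type*} [MeasurableSpace Ω] (P : Measure Ω) (φ : ℝ → ℝ)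
    (S : ℕ → Ω → Fin d → ℤ) (lam : ℝ) (x : Fin d → ℤ) : ℝ :=
  -Real.log (∫ ω, Set.indicator (hits S x)
    (fun ω' => Real.exp (-(lam * (hitTime S x ω' : ℝ))
      - annPotential φ S (hitTime S x ω') ω')) ω ∂P)

/-- The quenched path potential `Ψ(n,ω) = Σ_{1 ≤ m ≤ n} V_{S(m)}(ω)`. -/
def quPotential {d : ℕ} {Ω Ωe : Type*} (V : (Fin d → ℤ) → Ωe → ℝ)
    (S : ℕ → Ω → Fin d → ℤ) (n : ℕ) (ωe : Ωe) (ω : Ω) : ℝ :=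
  ∑ m ∈ Finset.Icc 1 n, V (S m ω) ωe

/-- The quenched two-point function `a_λ(x,ω)`. -/
def twoPointA {d : ℕ} {Ω Ωe : Type*} [MeasurableSpace Ω] (P : Measure Ω)
    (V : (Fin d → ℤ) → Ωe → ℝ) (S : ℕ → Ω → Fin d → ℤ) (lam : ℝ) (x : Fin d → ℤ)
    (ωe : Ωe) : ℝ :=
  -Real.log (∫ ω, Set.indicator (hits S x)
    (fun ω' => Real.exp (-(lam * (hitTime S x ω' : ℝ))
      - quPotential V S (hitTime S x ω') ωe ω')) ω ∂P)

/-- Assumptions (Qu) on the random potential `𝕍 = (V_x)`: i.i.d., nonnegative, nontrivial,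
in `L^d`, with essential infimum `0`. -/
def IsIIDPotential {d : ℕ} {Ωe : Type*} [MeasurableSpace Ωe] (μ : Measure Ωe)
    (V : (Fin d → ℤ) → Ωe → ℝ) : Prop :=
  (∀ x, Measurable (V x)) ∧
    (∀ x, ∀ᵐ ωe ∂μ, 0 ≤ V x ωe) ∧
    iIndepFun V μ ∧
    (∀ x, Measure.map (V x) μ = Measure.map (V 0) μ) ∧
    (¬∃ c : ℝ, V 0 =ᵐ[μ] fun _ => c) ∧
    MemLp (V 0) d μ ∧
    essInf (V 0) μ = 0

/-- The quenched shape theorem property for the family `α` of Lyapunov norms: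
`a_λ(x_k, ·)/α_λ(x_k) → 1` almost surely along any `‖x_k‖₁ → ∞`. -/
def QuShape {d : ℕ} {Ω Ωe : Type*} [MeasurableSpace Ω] [MeasurableSpace Ωe]
    (P : Measure Ω) (μ : Measure Ωe) (V : (Fin d → ℤ) → Ωe → ℝ)
    (S : ℕ → Ω → Fin d → ℤ) (α : ℝ → (Fin d → ℝ) → ℝ) : Prop :=
  ∀ lam : ℝ, 0 ≤ lam → ∃ F : Set Ωe, μ Fᶜ = 0 ∧
    ∀ ωe ∈ F, ∀ xs : ℕ → Fin d → ℤ, Tendsto (fun k => norm1Z (xs k)) atTop atTop →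
      Tendsto (fun k => twoPointA P V S lam (xs k) ωe / α lam (zToR (xs k))) atTop (𝓝 1)

/-- The annealed shape theorem property for the family `β` of Lyapunov norms:
`b_λ(x_k)/β_λ(x_k) → 1` along any `‖x_k‖₁ → ∞`. -/
def AnShape {d : ℕ} {Ω : Type*} [MeasurableSpace Ω] (P : Measure Ω) (φ : ℝ → ℝ)
    (S : ℕ → Ω → Fin d → ℤ) (β : ℝ → (Fin d → ℝ) → ℝ) : Prop :=
  ∀ lam : ℝ, 0 ≤ lam → ∀ xs : ℕ → Fin d → ℤ,
    Tendsto (fun k => norm1Z (xs k)) atTop atTop →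
      Tendsto (fun k => twoPointB P φ S lam (xs k) / β lam (zToR (xs k))) atTop (𝓝 1)

/-- The rate function `x ↦ sup_{λ ≥ 0} (β_λ(x) − λ)`, with values in `EReal`. -/
def rateFn {d : ℕ} (β : ℝ → (Fin d → ℝ) → ℝ) (x : Fin d → ℝ) : EReal :=
  ⨆ (lam : ℝ) (_ : 0 ≤ lam), ((β lam x - lam : ℝ) : EReal)

/-- The free energy `sup_{x ∈ ℝ^d} (h·x − I(x))`, with values in `EReal`. -/
def freeEnergySup {d : ℕ} (β : ℝ → (Fin d → ℝ) → ℝ) (h : Fin d → ℝ) : EReal :=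
  ⨆ x : Fin d → ℝ, ((dotR h x : ℝ) : EReal) - rateFn β x

/-- The tilted rate function `x ↦ I(x) − h·x + sup_y (h·y − I(y))`. -/
def tiltedRate {d : ℕ} (β : ℝ → (Fin d → ℝ) → ℝ) (h x : Fin d → ℝ) : EReal :=
  rateFn β x - ((dotR h x : ℝ) : EReal) + freeEnergySup β h

/-- The annealed partition function `Z_n^h`. -/
def Zan {d : ℕ} {Ω : Type*} [MeasurableSpace Ω] (P : Measure Ω) (φ : ℝ → ℝ)
    (S : ℕ → Ω → Fin d → ℤ) (h : Fin d → ℝ) (n : ℕ) : ℝ :=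
  ∫ ω, Real.exp (dotR h (zToR (S n ω)) - annPotential φ S n ω) ∂P

/-- The annealed path measure `Q_n^h`, as an `ℝ≥0∞`-valued set function. -/
def Qan {d : ℕ} {Ω : Type*} [MeasurableSpace Ω] (P : Measure Ω) (φ : ℝ → ℝ)
    (S : ℕ → Ω → Fin d → ℤ) (h : Fin d → ℝ) (n : ℕ) (B : Set Ω) : ENNReal :=
  (∫⁻ ω in B, ENNReal.ofReal (Real.exp (dotR h (zToR (S n ω)) - annPotential φ S n ω)) ∂P) /
    ∫⁻ ω, ENNReal.ofReal (Real.exp (dotR h (zToR (S n ω)) - annPotential φ S n ω)) ∂P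

/-- The quenched partition function `Z_{n,ω}^h`. -/
def Zqu {d : ℕ} {Ω Ωe : Type*} [MeasurableSpace Ω] (P : Measure Ω)
    (V : (Fin d → ℤ) → Ωe → ℝ) (S : ℕ → Ω → Fin d → ℤ) (h : Fin d → ℝ) (n : ℕ)
    (ωe : Ωe) : ℝ :=
  ∫ ω, Real.exp (dotR h (zToR (S n ω)) - quPotential V S n ωe ω) ∂P

/-- The quenched path measure `Q_{n,ω}^h`, as an `ℝ≥0∞`-valued set function. -/
def Qqu {d : ℕ} {Ω Ωe : Type*} [MeasurableSpace Ω] (P : Measure Ω)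
    (V : (Fin d → ℤ) → Ωe → ℝ) (S : ℕ → Ω → Fin d → ℤ) (h : Fin d → ℝ) (n : ℕ)
    (ωe : Ωe) (B : Set Ω) : ENNReal :=
  (∫⁻ ω in B, ENNReal.ofReal (Real.exp (dotR h (zToR (S n ω)) - quPotential V S n ωe ω)) ∂P) /
    ∫⁻ ω, ENNReal.ofReal (Real.exp (dotR h (zToR (S n ω)) - quPotential V S n ωe ω)) ∂P

/-!
Write `I(x) = exp (-b_λ(x)) = E[exp (-λ H(x) - Φ(H(x))); H(x) < ∞]`; the claim is
`I(x) I(y) ≤ I(x + y)` together with `I > 0`.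

A path that first hits `x` at time `n` and whose increments after time `n` then reach `y` at time
`m` visits `x + y` by time `n + m`. Local times are additive under this splitting of the path and
`φ` is subadditive (concave with `φ 0 = 0`), so the weight of the whole path for `x + y` dominates
the product of the weights of the two pieces. Summing over the value `n` of `H(x)` and using the
Markov property at the fixed time `n` (the increments after `n` are independent of the path up to
`n` and form a copy of the walk) turns this pathwise inequality into `I(x) I(y) ≤ I(x + y)`.
Positivity follows from the same inequality, since `I(0) > 0` and `I(s) > 0` for a unit step `s`.
-/

lemma _root_.ConcaveOn.map_add_le {f : ℝ → ℝ} (hf : ConcaveOn ℝ (Ici 0) f) (h0 : 0 ≤ f 0) {a b : ℝ}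
    (ha : 0 ≤ a) (hb : 0 ≤ b) : f (a + b) ≤ f a + f b := by
  rcases (add_nonneg ha hb).eq_or_lt with hab | hab
  · obtain ⟨rfl, rfl⟩ : a = 0 ∧ b = 0 := ⟨by linarith, by linarith⟩
    simpa using h0
  -- `a` and `b` are convex combinations of `0` and `a + b`
  have hscale : ∀ c, 0 ≤ c → c ≤ a + b → c / (a + b) * f (a + b) ≤ f c := by
    intro c hc hcab
    have h := hf.2 self_mem_Ici (mem_Ici.2 hab.le)
      (sub_nonneg.2 ((div_le_one hab).2 hcab)) (div_nonneg hc hab.le) (sub_add_cancel 1 _)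
    simp only [smul_eq_mul, mul_zero, zero_add] at h
    rw [div_mul_cancel₀ c hab.ne'] at h
    nlinarith [mul_nonneg (sub_nonneg.2 ((div_le_one hab).2 hcab)) h0]
  have ha' := hscale a ha (by linarith)
  have hb' := hscale b hb (by linarith)
  have : a / (a + b) * f (a + b) + b / (a + b) * f (a + b) = f (a + b) := by
    field_simp
  linarith

namespace IsGoodPhi

variable {φ : ℝ → ℝ}

lemma nonneg_nat (hφ : IsGoodPhi φ) (k : ℕ) : 0 ≤ φ k :=
  hφ.2.1 k k.cast_nonneg

lemma mono_nat (hφ : IsGoodPhi φ) {a b : ℕ} (h : a ≤ b) : φ a ≤ φ b :=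
  hφ.2.2.1 (mem_Ici.2 a.cast_nonneg) (mem_Ici.2 b.cast_nonneg) (Nat.cast_le.2 h)

lemma add_le_nat (hφ : IsGoodPhi φ) (a b : ℕ) : φ (a + b : ℕ) ≤ φ a + φ b := by
  push_cast
  exact hφ.2.2.2.1.map_add_le hφ.1.ge a.cast_nonneg b.cast_nonneg

end IsGoodPhi

section Path

variable {d : ℕ} {φ : ℝ → ℝ} {lam : ℝ}

def pathLocalTime (w : ℕ → Fin d → ℤ) (z : Fin d → ℤ) (n : ℕ) : ℕ :=
  ((Finset.Icc 1 n).filter (fun m => w m = z)).card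

def pathPotential (φ : ℝ → ℝ) (w : ℕ → Fin d → ℤ) (n : ℕ) : ℝ :=
  ∑' z : Fin d → ℤ, φ (pathLocalTime w z n)

def firstHit (w : ℕ → Fin d → ℤ) (x : Fin d → ℤ) : ℕ :=
  sInf {n : ℕ | w n = x}

def hitWeight (φ : ℝ → ℝ) (lam : ℝ) (x : Fin d → ℤ) : (ℕ → Fin d → ℤ) → ℝ :=
  Set.indicator {w | ∃ n, w n = x}
    (fun w => Real.exp (-(lam * (firstHit w x : ℝ)) - pathPotential φ w (firstHit w x)))

def pathShift (w : ℕ → Fin d → ℤ) (n : ℕ) : ℕ → Fin d → ℤ :=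
  fun k => w (n + k) - w n

lemma pathLocalTime_succ (w : ℕ → Fin d → ℤ) (z : Fin d → ℤ) (n : ℕ) :
    pathLocalTime w z (n + 1) = pathLocalTime w z n + if w (n + 1) = z then 1 else 0 := by
  simp only [pathLocalTime, Finset.card_filter]
  exact Finset.sum_Icc_succ_top (by omega) _

lemma pathLocalTime_add (w : ℕ → Fin d → ℤ) (z : Fin d → ℤ) (n m : ℕ) :
    pathLocalTime w z (n + m) =
      pathLocalTime w z n + pathLocalTime (pathShift w n) (z - w n) m := by
  induction m with
  | zero => simp [pathLocalTime]
  | succ m ih =>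
    rw [← add_assoc, pathLocalTime_succ, ih, pathLocalTime_succ, add_assoc]
    simp [pathShift, sub_eq_iff_eq_add, add_assoc]

lemma pathLocalTime_eq_zero {w : ℕ → Fin d → ℤ} {z : Fin d → ℤ} {n : ℕ}
    (hz : z ∉ (Finset.Icc 1 n).image w) : pathLocalTime w z n = 0 := by
  simp only [pathLocalTime, Finset.card_eq_zero, Finset.filter_eq_empty_iff]
  exact fun m hm hwm => hz (Finset.mem_image.2 ⟨m, hm, hwm⟩)

lemma summable_pathPotential {φ : ℝ → ℝ} (h0 : φ 0 = 0) (w : ℕ → Fin d → ℤ) (n : ℕ) :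
    Summable fun z => φ (pathLocalTime w z n) :=
  summable_of_ne_finset_zero (s := (Finset.Icc 1 n).image w) fun z hz => by
    rw [pathLocalTime_eq_zero hz]; simpa using h0

lemma pathPotential_nonneg (hφ : IsGoodPhi φ) (w : ℕ → Fin d → ℤ) (n : ℕ) :
    0 ≤ pathPotential φ w n :=
  tsum_nonneg fun _ => hφ.nonneg_nat _

lemma pathPotential_mono (hφ : IsGoodPhi φ) (w : ℕ → Fin d → ℤ) {n n' : ℕ} (h : n ≤ n') :
    pathPotential φ w n ≤ pathPotential φ w n' := by
  refine Summable.tsum_le_tsum (fun z => hφ.mono_nat ?_) (summable_pathPotential hφ.1 w n)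
    (summable_pathPotential hφ.1 w n')
  obtain ⟨m, rfl⟩ := Nat.exists_eq_add_of_le h
  rw [pathLocalTime_add]
  exact Nat.le_add_right _ _

lemma pathPotential_add_le (hφ : IsGoodPhi φ) (w : ℕ → Fin d → ℤ) (n m : ℕ) :
    pathPotential φ w (n + m) ≤ pathPotential φ w n + pathPotential φ (pathShift w n) m := by
  have hshift : Summable fun z => φ (pathLocalTime (pathShift w n) (z - w n) m) :=
    (Equiv.subRight (w n)).summable_iff.2 (summable_pathPotential hφ.1 _ m)
  calc pathPotential φ w (n + m)
      ≤ ∑' z, (φ (pathLocalTime w z n) + φ (pathLocalTime (pathShift w n) (z - w n) m)) := by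
        refine Summable.tsum_le_tsum (fun z => ?_) (summable_pathPotential hφ.1 w _)
          ((summable_pathPotential hφ.1 w n).add hshift)
        rw [pathLocalTime_add]
        exact hφ.add_le_nat _ _
    _ = pathPotential φ w n + pathPotential φ (pathShift w n) m := by
        rw [Summable.tsum_add (summable_pathPotential hφ.1 w n) hshift]
        exact congrArg _ ((Equiv.subRight (w n)).tsum_eq fun z => φ (pathLocalTime _ z m))

def firstHitsAt (x : Fin d → ℤ) (n : ℕ) : Set (ℕ → Fin d → ℤ) :=
  {w | w n = x ∧ ∀ k < n, w k ≠ x}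

lemma firstHit_spec {w : ℕ → Fin d → ℤ} {x : Fin d → ℤ} (h : ∃ n, w n = x) :
    w (firstHit w x) = x :=
  Nat.sInf_mem h

lemma firstHit_le {w : ℕ → Fin d → ℤ} {x : Fin d → ℤ} {n : ℕ} (h : w n = x) :
    firstHit w x ≤ n :=
  Nat.sInf_le h

lemma firstHit_eq_of_mem {w : ℕ → Fin d → ℤ} {x : Fin d → ℤ} {n : ℕ}
    (h : w ∈ firstHitsAt x n) : firstHit w x = n :=
  (firstHit_le h.1).antisymm <| not_lt.1 fun hlt => h.2 _ hlt (firstHit_spec ⟨n, h.1⟩)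

lemma mem_firstHitsAt_firstHit {w : ℕ → Fin d → ℤ} {x : Fin d → ℤ} (h : ∃ n, w n = x) :
    w ∈ firstHitsAt x (firstHit w x) :=
  ⟨firstHit_spec h, fun _ hk => Nat.notMem_of_lt_sInf hk⟩

lemma iUnion_firstHitsAt (x : Fin d → ℤ) :
    ⋃ n, firstHitsAt x n = {w : ℕ → Fin d → ℤ | ∃ n, w n = x} := by
  ext w
  simp only [mem_iUnion, mem_ofPred_eq]
  exact ⟨fun ⟨n, hn⟩ => ⟨n, hn.1⟩, fun h => ⟨_, mem_firstHitsAt_firstHit h⟩⟩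

lemma pairwise_disjoint_firstHitsAt (x : Fin d → ℤ) :
    Pairwise (Function.onFun Disjoint (firstHitsAt x : ℕ → Set (ℕ → Fin d → ℤ))) :=
  fun _ _ hne => Set.disjoint_left.2 fun _ hn hm =>
    hne ((firstHit_eq_of_mem hn).symm.trans (firstHit_eq_of_mem hm))

lemma hitWeight_nonneg (x : Fin d → ℤ) (w : ℕ → Fin d → ℤ) : 0 ≤ hitWeight φ lam x w :=
  Set.indicator_nonneg (fun _ _ => (Real.exp_pos _).le) w

lemma hitWeight_le_one (hφ : IsGoodPhi φ) (hlam : 0 ≤ lam) (x : Fin d → ℤ)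
    (w : ℕ → Fin d → ℤ) : hitWeight φ lam x w ≤ 1 := by
  refine Set.indicator_apply_le' (fun _ => Real.exp_le_one_iff.2 ?_) fun _ => zero_le_one
  nlinarith [pathPotential_nonneg hφ w (firstHit w x), (firstHit w x).cast_nonneg (α := ℝ)]

lemma hitWeight_of_hits {x : Fin d → ℤ} {w : ℕ → Fin d → ℤ} (h : ∃ n, w n = x) :
    hitWeight φ lam x w =
      Real.exp (-(lam * (firstHit w x : ℝ)) - pathPotential φ w (firstHit w x)) :=
  Set.indicator_of_mem (show w ∈ {w | ∃ n, w n = x} from h) _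

lemma hitWeight_of_not_hits {x : Fin d → ℤ} {w : ℕ → Fin d → ℤ} (h : ¬∃ n, w n = x) :
    hitWeight φ lam x w = 0 :=
  Set.indicator_of_notMem (show w ∉ {w | ∃ n, w n = x} from h) _

lemma hitWeight_mul_hitWeight_pathShift_le (hφ : IsGoodPhi φ) (hlam : 0 ≤ lam)
    (x y : Fin d → ℤ) (w : ℕ → Fin d → ℤ) :
    hitWeight φ lam x w * hitWeight φ lam y (pathShift w (firstHit w x)) ≤
      hitWeight φ lam (x + y) w := by
  by_cases hx : ∃ n, w n = x
  swap
  · rw [hitWeight_of_not_hits hx, zero_mul]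
    exact hitWeight_nonneg _ _
  set n := firstHit w x
  by_cases hy : ∃ m, pathShift w n m = y
  swap
  · rw [hitWeight_of_not_hits hy, mul_zero]
    exact hitWeight_nonneg _ _
  set m := firstHit (pathShift w n) y
  have hxy : w (n + m) = x + y := by
    have := firstHit_spec hy
    rw [pathShift, firstHit_spec hx] at this
    exact sub_eq_iff_eq_add'.1 this
  have hle : firstHit w (x + y) ≤ n + m := firstHit_le hxy
  have hpot := (pathPotential_mono hφ w hle).trans (pathPotential_add_le hφ w n m)
  have htime : lam * (firstHit w (x + y) : ℝ) ≤ lam * n + lam * m := by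
    rw [← mul_add]
    exact mul_le_mul_of_nonneg_left (by exact_mod_cast hle) hlam
  rw [hitWeight_of_hits hx, hitWeight_of_hits hy, hitWeight_of_hits ⟨_, hxy⟩, ← Real.exp_add,
    Real.exp_le_exp]
  linarith

lemma sum_indicator_firstHitsAt_mul_le (hφ : IsGoodPhi φ) (hlam : 0 ≤ lam) (x y : Fin d → ℤ)
    (s : Finset ℕ) (w : ℕ → Fin d → ℤ) :
    ∑ n ∈ s, (firstHitsAt x n).indicator (hitWeight φ lam x) w *
        hitWeight φ lam y (pathShift w n) ≤ hitWeight φ lam (x + y) w := by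
  have hterm : ∀ n, (firstHitsAt x n).indicator (hitWeight φ lam x) w *
        hitWeight φ lam y (pathShift w n) =
      (firstHitsAt x n).indicator
        (fun w => hitWeight φ lam x w * hitWeight φ lam y (pathShift w (firstHit w x))) w := by
    intro n
    by_cases hw : w ∈ firstHitsAt x n
    · rw [Set.indicator_of_mem hw, Set.indicator_of_mem hw, firstHit_eq_of_mem hw]
    · rw [Set.indicator_of_notMem hw, Set.indicator_of_notMem hw, zero_mul]
  simp only [hterm]
  rw [← Finset.indicator_biUnion_apply _ _
    fun i _ j _ hij => pairwise_disjoint_firstHitsAt x hij]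
  refine (Set.indicator_le_self' (fun w _ => ?_) w).trans
    (hitWeight_mul_hitWeight_pathShift_le hφ hlam x y w)
  exact mul_nonneg (hitWeight_nonneg _ _) (hitWeight_nonneg _ _)

end Path

section Measurability

variable {d : ℕ} {φ : ℝ → ℝ} {lam : ℝ}

lemma measurable_pathLocalTime (z : Fin d → ℤ) (n : ℕ) :
    Measurable fun w : ℕ → Fin d → ℤ => pathLocalTime w z n := by
  simp only [pathLocalTime, Finset.card_filter]
  refine Finset.measurable_sum _ fun m _ => Measurable.ite ?_ measurable_const measurable_const
  exact measurableSet_eq_fun (measurable_pi_apply m) measurable_const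

lemma measurable_pathPotential (n : ℕ) :
    Measurable fun w : ℕ → Fin d → ℤ => pathPotential φ w n :=
  Measurable.tsum fun z =>
    (measurable_from_nat (f := fun k : ℕ => φ k)).comp (measurable_pathLocalTime z n)

lemma measurableSet_firstHitsAt (x : Fin d → ℤ) (n : ℕ) :
    MeasurableSet (firstHitsAt x n : Set (ℕ → Fin d → ℤ)) := by
  simp only [firstHitsAt, ofPred_and, ofPred_forall]
  exact (measurableSet_singleton x).preimage (measurable_pi_apply n) |>.inter <|
    MeasurableSet.iInter fun k => MeasurableSet.iInter fun _ =>
      ((measurableSet_singleton x).preimage (measurable_pi_apply k)).compl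

lemma measurableSet_hits_path (x : Fin d → ℤ) :
    MeasurableSet {w : ℕ → Fin d → ℤ | ∃ n, w n = x} := by
  rw [← iUnion_firstHitsAt]
  exact MeasurableSet.iUnion (measurableSet_firstHitsAt x)

lemma measurable_firstHit (x : Fin d → ℤ) :
    Measurable fun w : ℕ → Fin d → ℤ => firstHit w x := by
  refine measurable_to_countable' fun n => ?_
  have : (fun w : ℕ → Fin d → ℤ => firstHit w x) ⁻¹' {n} =
      firstHitsAt x n ∪ {w | n = 0 ∧ ¬∃ k, w k = x} := by
    ext w
    simp only [mem_preimage, mem_singleton_iff, mem_union, mem_ofPred_eq]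
    by_cases h : ∃ k, w k = x
    · simp only [h, not_true_eq_false, and_false, or_false]
      exact ⟨fun hn => hn ▸ mem_firstHitsAt_firstHit h, firstHit_eq_of_mem⟩
    · have hH : firstHit w x = 0 := by
        simp only [firstHit, not_exists] at h ⊢
        simp [h]
      have hn : w ∉ firstHitsAt x n := fun hw => h ⟨n, hw.1⟩
      rw [hH]
      simp only [hn, h, false_or, not_false_eq_true, and_true]
      exact eq_comm
  rw [this]
  exact (measurableSet_firstHitsAt x n).union
    ((MeasurableSet.const _).inter (measurableSet_hits_path x).compl)

lemma measurable_hitWeight (x : Fin d → ℤ) :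
    Measurable (hitWeight φ lam x : (ℕ → Fin d → ℤ) → ℝ) := by
  refine Measurable.indicator ?_ ?_
  · have : Measurable fun p : (ℕ → Fin d → ℤ) × ℕ =>
        Real.exp (-(lam * (p.2 : ℝ)) - pathPotential φ p.1 p.2) :=
      measurable_from_prod_countable_left fun n => by
        dsimp only
        exact (measurable_const.sub (measurable_pathPotential n)).exp
    exact this.comp (measurable_id.prodMk (measurable_firstHit x))
  · exact measurableSet_hits_path x

end Measurability

section Stopped

variable {d : ℕ} {φ : ℝ → ℝ} {lam : ℝ}

def stoppedPath (w : ℕ → Fin d → ℤ) (n : ℕ) : ℕ → Fin d → ℤ :=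
  fun k => w (min k n)

lemma stoppedPath_apply_of_le (w : ℕ → Fin d → ℤ) {n k : ℕ} (hk : k ≤ n) :
    stoppedPath w n k = w k :=
  congrArg w (min_eq_left hk)

lemma stoppedPath_mem_firstHitsAt_iff {w : ℕ → Fin d → ℤ} {x : Fin d → ℤ} {n : ℕ} :
    stoppedPath w n ∈ firstHitsAt x n ↔ w ∈ firstHitsAt x n := by
  simp only [firstHitsAt, mem_ofPred_eq, stoppedPath_apply_of_le w le_rfl]
  refine and_congr_right fun _ => forall₂_congr fun k hk => ?_
  rw [stoppedPath_apply_of_le w hk.le]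

lemma pathPotential_stoppedPath (w : ℕ → Fin d → ℤ) (n : ℕ) :
    pathPotential φ (stoppedPath w n) n = pathPotential φ w n := by
  refine tsum_congr fun z => congrArg (fun k : ℕ => φ k) ?_
  refine congrArg Finset.card (Finset.filter_congr fun k hk => ?_)
  rw [stoppedPath_apply_of_le w (Finset.mem_Icc.1 hk).2]

lemma indicator_hitWeight_stoppedPath (x : Fin d → ℤ) (n : ℕ) (w : ℕ → Fin d → ℤ) :
    (firstHitsAt x n).indicator (hitWeight φ lam x) (stoppedPath w n) =
      (firstHitsAt x n).indicator (hitWeight φ lam x) w := by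
  by_cases hw : w ∈ firstHitsAt x n
  · have hw' := stoppedPath_mem_firstHitsAt_iff.2 hw
    rw [Set.indicator_of_mem hw, Set.indicator_of_mem hw', hitWeight_of_hits ⟨n, hw.1⟩,
      hitWeight_of_hits ⟨n, hw'.1⟩, firstHit_eq_of_mem hw, firstHit_eq_of_mem hw',
      pathPotential_stoppedPath]
  · rw [Set.indicator_of_notMem hw,
      Set.indicator_of_notMem (stoppedPath_mem_firstHitsAt_iff.not.2 hw)]

end Stopped

section Walk

variable {d : ℕ}

def partialSums (v : ℕ → Fin d → ℤ) : ℕ → Fin d → ℤ :=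
  fun k => ∑ j ∈ Finset.range k, v j

lemma measurable_partialSums : Measurable (partialSums : (ℕ → Fin d → ℤ) → ℕ → Fin d → ℤ) :=
  measurable_pi_lambda _ fun _ => Finset.measurable_sum _ fun j _ => measurable_pi_apply j

variable {Ω : Type*} {S : ℕ → Ω → Fin d → ℤ}

def walk (S : ℕ → Ω → Fin d → ℤ) (ω : Ω) : ℕ → Fin d → ℤ :=
  fun k => S k ω

lemma pathShift_walk (n : ℕ) (ω : Ω) :
    pathShift (walk S ω) n = partialSums fun k => S (n + k + 1) ω - S (n + k) ω :=
  funext fun k => (Finset.sum_range_sub (fun j => S (n + j) ω) k).symm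

variable [MeasurableSpace Ω] {P : Measure Ω}

lemma walk_eq_partialSums (hS : IsSRW P S) (ω : Ω) :
    walk S ω = partialSums fun k => S (k + 1) ω - S k ω := by
  ext1 k
  simp [partialSums, walk, Finset.sum_range_sub (fun j => S j ω), hS.1 ω]

lemma measurable_walk (hS : IsSRW P S) : Measurable (walk S) :=
  measurable_pi_lambda _ hS.2.1

lemma measurable_increment (hS : IsSRW P S) (n : ℕ) :
    Measurable fun ω => S (n + 1) ω - S n ω :=
  measurable_of_countable (fun p : (Fin d → ℤ) × (Fin d → ℤ) => p.1 - p.2) |>.comp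
    ((hS.2.1 (n + 1)).prodMk (hS.2.1 n))

lemma measurable_stoppedPath_walk (hS : IsSRW P S) (n : ℕ) :
    Measurable fun ω => stoppedPath (walk S ω) n :=
  measurable_pi_lambda _ fun k => hS.2.1 (min k n)

lemma measurable_increments (hS : IsSRW P S) (n : ℕ) :
    Measurable fun ω k => S (n + k + 1) ω - S (n + k) ω :=
  measurable_pi_lambda _ fun k => measurable_increment hS (n + k)

lemma measurable_pathShift_walk (hS : IsSRW P S) (n : ℕ) :
    Measurable fun ω => pathShift (walk S ω) n := by
  simp only [pathShift_walk]
  exact measurable_partialSums.comp (measurable_increments hS n)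

lemma map_pathShift_walk [IsProbabilityMeasure P] (hS : IsSRW P S) (n : ℕ) :
    P.map (fun ω => pathShift (walk S ω) n) = P.map (walk S) := by
  have hlaw : ∀ a, P.map (fun ω k => S (a + k + 1) ω - S (a + k) ω) =
      Measure.infinitePi fun _ => stepDist d := by
    intro a
    rw [(hS.2.2.2.precomp (add_right_injective a)).map_fun_eq_infinitePi_map
      fun k => measurable_increment hS (a + k)]
    simp only [hS.2.2.1]
  have hpart : ∀ a, (fun ω => pathShift (walk S ω) a) =
      partialSums ∘ fun ω k => S (a + k + 1) ω - S (a + k) ω :=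
    fun a => funext fun ω => pathShift_walk a ω
  have hwalk : walk S = partialSums ∘ fun ω k => S (0 + k + 1) ω - S (0 + k) ω :=
    funext fun ω => by simpa only [zero_add, Function.comp_apply] using walk_eq_partialSums hS ω
  rw [hpart, hwalk, ← Measure.map_map measurable_partialSums (measurable_increments hS n),
    ← Measure.map_map measurable_partialSums (measurable_increments hS 0), hlaw, hlaw]

lemma indepFun_stoppedPath_pathShift (hS : IsSRW P S) (n : ℕ) :
    IndepFun (fun ω => stoppedPath (walk S ω) n) (fun ω => pathShift (walk S ω) n) P := by
  let m : ℕ → MeasurableSpace Ω := fun i =>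
    MeasurableSpace.comap (fun ω => S (i + 1) ω - S i ω) inferInstance
  have hinc : ∀ (T : Set ℕ) i, i ∈ T →
      Measurable[⨆ j ∈ T, m j] fun ω => S (i + 1) ω - S i ω :=
    fun T i hi => (comap_measurable _).mono (le_iSup₂ (f := fun j (_ : j ∈ T) => m j) i hi) le_rfl
  have hindep := indep_iSup_of_disjoint (fun i => (measurable_increment hS i).comap_le)
    hS.2.2.2.iIndep (S := Iio n) (T := Ici n) (Set.disjoint_left.2 fun _ hi hi' =>
      (mem_Ici.1 hi').not_gt (mem_Iio.1 hi))
  rw [IndepFun_iff_Indep]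
  refine indep_of_indep_of_le_left (indep_of_indep_of_le_right hindep ?_) ?_
  · refine Measurable.comap_le (@measurable_pi_lambda _ _ _ (⨆ i ∈ Ici n, m i) _ _ fun k => ?_)
    simp only [pathShift_walk, partialSums]
    exact Finset.measurable_sum _ fun j _ => hinc _ (n + j) (mem_Ici.2 (Nat.le_add_right n j))
  · refine Measurable.comap_le (@measurable_pi_lambda _ _ _ (⨆ i ∈ Iio n, m i) _ _ fun k => ?_)
    simp only [stoppedPath, walk_eq_partialSums hS, partialSums]
    exact Finset.measurable_sum _ fun j hj =>
      hinc _ j (mem_Iio.2 ((Finset.mem_range.1 hj).trans_le (min_le_right k n)))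

lemma integral_mul_comp_pathShift [IsProbabilityMeasure P] (hS : IsSRW P S) (n : ℕ)
    {F G : (ℕ → Fin d → ℤ) → ℝ} (hF : Measurable F) (hFn : ∀ w, F (stoppedPath w n) = F w)
    (hG : Measurable G) :
    ∫ ω, F (walk S ω) * G (pathShift (walk S ω) n) ∂P =
      (∫ ω, F (walk S ω) ∂P) * ∫ ω, G (walk S ω) ∂P := by
  have h := ((indepFun_stoppedPath_pathShift hS n).comp hF hG).integral_mul_eq_mul_integral
    (hF.comp (measurable_stoppedPath_walk hS n)).aestronglyMeasurable
    (hG.comp (measurable_pathShift_walk hS n)).aestronglyMeasurable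
  simp only [Function.comp_def, Pi.mul_apply, hFn] at h
  rw [h, ← integral_map (measurable_pathShift_walk hS n).aemeasurable
    hG.aestronglyMeasurable, map_pathShift_walk hS n,
    integral_map (measurable_walk hS).aemeasurable hG.aestronglyMeasurable]

end Walk

section HitExpectation

variable {d : ℕ} {Ω : Type*} [MeasurableSpace Ω] {P : Measure Ω} {S : ℕ → Ω → Fin d → ℤ}
  {φ : ℝ → ℝ} {lam : ℝ}

def hitExpectation (P : Measure Ω) (φ : ℝ → ℝ) (S : ℕ → Ω → Fin d → ℤ) (lam : ℝ)
    (x : Fin d → ℤ) : ℝ :=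
  ∫ ω, hitWeight φ lam x (walk S ω) ∂P

lemma twoPointB_eq_neg_log (x : Fin d → ℤ) :
    twoPointB P φ S lam x = -Real.log (hitExpectation P φ S lam x) :=
  rfl

variable [IsProbabilityMeasure P]

lemma integrable_hitWeight_walk (hS : IsSRW P S) (hφ : IsGoodPhi φ) (hlam : 0 ≤ lam)
    (x : Fin d → ℤ) : Integrable (fun ω => hitWeight φ lam x (walk S ω)) P :=
  Integrable.of_mem_Icc 0 1 ((measurable_hitWeight x).comp (measurable_walk hS)).aemeasurable
    (ae_of_all _ fun _ => ⟨hitWeight_nonneg _ _, hitWeight_le_one hφ hlam _ _⟩)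

lemma hasSum_hitExpectation (hS : IsSRW P S) (hφ : IsGoodPhi φ) (hlam : 0 ≤ lam)
    (x : Fin d → ℤ) :
    HasSum (fun n => ∫ ω, (firstHitsAt x n).indicator (hitWeight φ lam x) (walk S ω) ∂P)
      (hitExpectation P φ S lam x) := by
  have h := hasSum_integral_iUnion (μ := P)
    (fun n => (measurableSet_firstHitsAt x n).preimage (measurable_walk hS))
    (fun i j hij => (pairwise_disjoint_firstHitsAt x hij).preimage _)
    (integrable_hitWeight_walk hS hφ hlam x).integrableOn
  have hhits : ∫ ω in walk S ⁻¹' {w | ∃ n, w n = x}, hitWeight φ lam x (walk S ω) ∂P =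
      hitExpectation P φ S lam x :=
    setIntegral_eq_integral_of_forall_compl_eq_zero fun ω hω => hitWeight_of_not_hits hω
  rw [← preimage_iUnion, iUnion_firstHitsAt, hhits] at h
  have hterm : ∀ n, ∫ ω in walk S ⁻¹' firstHitsAt x n, hitWeight φ lam x (walk S ω) ∂P =
      ∫ ω, (firstHitsAt x n).indicator (hitWeight φ lam x) (walk S ω) ∂P := fun n => by
    rw [← integral_indicator ((measurableSet_firstHitsAt x n).preimage (measurable_walk hS))]
    rfl
  simpa only [hterm] using h

lemma hitExpectation_mul_le (hS : IsSRW P S) (hφ : IsGoodPhi φ) (hlam : 0 ≤ lam)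
    (x y : Fin d → ℤ) :
    hitExpectation P φ S lam x * hitExpectation P φ S lam y ≤
      hitExpectation P φ S lam (x + y) := by
  set F : ℕ → (ℕ → Fin d → ℤ) → ℝ := fun n => (firstHitsAt x n).indicator (hitWeight φ lam x)
  have hF : ∀ n, Measurable (F n) := fun n =>
    (measurable_hitWeight x).indicator (measurableSet_firstHitsAt x n)
  have hF0 : ∀ n w, 0 ≤ F n w := fun n w => Set.indicator_nonneg (fun w _ => hitWeight_nonneg x w) w
  have hF1 : ∀ n w, F n w ≤ 1 := fun n w =>
    Set.indicator_apply_le' (fun _ => hitWeight_le_one hφ hlam x w) fun _ => zero_le_one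
  have hmarkov : ∀ n, (∫ ω, F n (walk S ω) ∂P) * hitExpectation P φ S lam y =
      ∫ ω, F n (walk S ω) * hitWeight φ lam y (pathShift (walk S ω) n) ∂P := fun n =>
    (integral_mul_comp_pathShift hS n (hF n) (indicator_hitWeight_stoppedPath x n)
      (measurable_hitWeight y)).symm
  refine hasSum_le_of_sum_le ((hasSum_hitExpectation hS hφ hlam x).mul_right _) fun s =>
    (Finset.sum_congr rfl fun n _ => hmarkov n).trans_le ?_
  rw [← integral_finsetSum s fun n _ => Integrable.of_mem_Icc 0 1
    (X := fun ω => F n (walk S ω) * hitWeight φ lam y (pathShift (walk S ω) n))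
    (((hF n).comp (measurable_walk hS)).mul
      ((measurable_hitWeight y).comp (measurable_pathShift_walk hS n))).aemeasurable
    (ae_of_all _ fun _ => ⟨mul_nonneg (hF0 _ _) (hitWeight_nonneg _ _),
      mul_le_one₀ (hF1 _ _) (hitWeight_nonneg _ _) (hitWeight_le_one hφ hlam _ _)⟩)]
  exact integral_mono_of_nonneg (ae_of_all _ fun ω => Finset.sum_nonneg fun n _ =>
    mul_nonneg (hF0 _ _) (hitWeight_nonneg _ _)) (integrable_hitWeight_walk hS hφ hlam (x + y))
    (ae_of_all _ fun ω => sum_indicator_firstHitsAt_mul_le hφ hlam x y s (walk S ω))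

end HitExpectation

section UnitSteps

variable {d : ℕ}

lemma single_mem_unitSteps (i : Fin d) (b : Bool) :
    Pi.single i (if b then 1 else -1) ∈ unitSteps d :=
  Finset.mem_image.2 ⟨(i, b), Finset.mem_univ _, funext fun j => by simp [Pi.single_apply]⟩

lemma unitSteps_induction {p : (Fin d → ℤ) → Prop} (h0 : p 0) (hunit : ∀ s ∈ unitSteps d, p s)
    (hadd : ∀ x y, p x → p y → p (x + y)) (x : Fin d → ℤ) : p x := by
  rw [← Finset.univ_sum_single x]
  refine Finset.sum_induction _ p hadd h0 fun i _ => ?_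
  induction x i using Int.induction_on with
  | zero => simpa using h0
  | succ k ih =>
    rw [Pi.single_add]
    exact hadd _ _ ih (by simpa using hunit _ (single_mem_unitSteps i true))
  | pred k ih =>
    rw [sub_eq_add_neg, Pi.single_add]
    exact hadd _ _ ih (by simpa using hunit _ (single_mem_unitSteps i false))

lemma stepDist_singleton_ne_zero {s : Fin d → ℤ} (hs : s ∈ unitSteps d) :
    stepDist d {s} ≠ 0 := by
  simp [stepDist, hs]

end UnitSteps

section Positivity

variable {d : ℕ} {Ω : Type*} [MeasurableSpace Ω] {P : Measure Ω} [IsProbabilityMeasure P]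
  {S : ℕ → Ω → Fin d → ℤ} {φ : ℝ → ℝ} {lam : ℝ}

lemma hitExpectation_pos_of_measure_ne_zero (hS : IsSRW P S) (hφ : IsGoodPhi φ)
    (hlam : 0 ≤ lam) {x : Fin d → ℤ} (hx : P (hits S x) ≠ 0) :
    0 < hitExpectation P φ S lam x := by
  have hsupp : Function.support (fun ω => hitWeight φ lam x (walk S ω)) = hits S x := by
    ext ω
    refine ⟨fun h => not_not.1 fun hn => h (hitWeight_of_not_hits hn), fun h => ?_⟩
    rw [Function.mem_support, hitWeight_of_hits (w := walk S ω) h]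
    exact (Real.exp_pos _).ne'
  rw [hitExpectation, integral_pos_iff_support_of_nonneg (fun ω => hitWeight_nonneg _ _)
    (integrable_hitWeight_walk hS hφ hlam x), hsupp]
  exact pos_iff_ne_zero.2 hx

lemma hitExpectation_pos (hS : IsSRW P S) (hφ : IsGoodPhi φ) (hlam : 0 ≤ lam)
    (x : Fin d → ℤ) : 0 < hitExpectation P φ S lam x := by
  refine unitSteps_induction ?_ (fun s hs => ?_)
    (fun x y hx hy => (mul_pos hx hy).trans_le (hitExpectation_mul_le hS hφ hlam x y)) x
  · refine hitExpectation_pos_of_measure_ne_zero hS hφ hlam ?_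
    rw [(eq_univ_of_forall fun ω => ⟨0, hS.1 ω⟩ : hits S 0 = univ), measure_univ]
    exact one_ne_zero
  · refine hitExpectation_pos_of_measure_ne_zero hS hφ hlam fun h =>
      stepDist_singleton_ne_zero hs ?_
    have hstep : (fun ω => S (0 + 1) ω - S 0 ω) ⁻¹' {s} ⊆ hits S s :=
      fun ω hω => ⟨1, by simpa [hS.1 ω] using hω⟩
    rw [← hS.2.2.1 0, Measure.map_apply (measurable_increment hS 0) (measurableSet_singleton s)]
    exact measure_mono_null hstep h

end Positivity

theorem annealed_two_point_subadditive_general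
    {d : ℕ}
    {Ω : Type*} [MeasurableSpace Ω] (P : Measure Ω) [IsProbabilityMeasure P]
    (S : ℕ → Ω → Fin d → ℤ) (hS : IsSRW P S)
    (φ : ℝ → ℝ) (hφ : IsGoodPhi φ) :
    ∀ lam : ℝ, 0 ≤ lam → ∀ x y : Fin d → ℤ,
      twoPointB P φ S lam (x + y) ≤ twoPointB P φ S lam x + twoPointB P φ S lam y := by
  intro lam hlam x y
  have hx := hitExpectation_pos hS hφ hlam (P := P) x
  have hy := hitExpectation_pos hS hφ hlam (P := P) y
  have hlog := Real.log_le_log (mul_pos hx hy) (hitExpectation_mul_le hS hφ hlam x y)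
  rw [Real.log_mul hx.ne' hy.ne'] at hlog
  simp only [twoPointB_eq_neg_log]
  linarith

/-- **Subadditivity of the annealed two-point function** (Flury, (8)). For every `λ ≥ 0`
and all `x, y ∈ ℤ^d`, `b_λ(x + y) ≤ b_λ(x) + b_λ(y)`. -/
theorem annealed_two_point_subadditive
    {d : ℕ} (hd : 0 < d)
    {Ω : Type*} [MeasurableSpace Ω] (P : Measure Ω) [IsProbabilityMeasure P]
    (S : ℕ → Ω → Fin d → ℤ) (hS : IsSRW P S)
    (φ : ℝ → ℝ) (hφ : IsGoodPhi φ) :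
    ∀ lam : ℝ, 0 ≤ lam → ∀ x y : Fin d → ℤ,
      twoPointB P φ S lam (x + y) ≤ twoPointB P φ S lam x + twoPointB P φ S lam y :=
  annealed_two_point_subadditive_general P S hS φ hφ

end RWRP
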